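/- arXiv:2503.24275 — 3 statements merged into one kernel-verified Lean document; each statement's English description precedes it below -/
import Mathlib

section
/- For s = σ + it with σ, t real and s avoiding the poles of the relevant Gamma factors, the combination Ψ(1 − s̄/2) − Ψ(1 − s/2) − Ψ((1+s)/2) + Ψ((1+s̄)/2) equals −4i(1/2 − σ) t Σ_{n=1}^∞ 8(n − 1/4) / (|2n + s − 1|² |2n − s̄|²). -/
/-!
For `a, b` off the poles of `Γ`, `Ψ a - Ψ b = ∑ₙ (1/(b+n) - 1/(a+n))`. When `re a, re b > 0` this
is the logarithmic derivative at `z = a` of Euler's product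
`Γ z Γ b / (Γ (z + b - a) Γ a) = ∏ⱼ (z + b - a + j)(a + j) / ((z + j)(b + j))`, whose factors are
`1 + O(j⁻²)` uniformly near `a`, so the product converges locally uniformly and may be
differentiated termwise; the recurrence `Ψ (z + 1) = Ψ z + 1/z` reduces the general case to this
one. The left-hand side of the theorem is the sum of two such differences, with `(a, b)` equal to
`(1 - s̄/2, 1 - s/2)` and `((1 + s̄)/2, (1 + s)/2)`; combining their `n`-th terms over a common
denominator gives `-(1 - s - s̄)(s - s̄) · 8(n + 3/4) / (|2n + 1 + s|² |2n + 2 - s̄|²)`, and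
`-(1 - s - s̄)(s - s̄) = -4i(1/2 - σ)t`.
-/

open Complex Filter Topology

noncomputable def X (s : ℂ) : ℂ :=
  ((5 : ℂ) / Real.pi) ^ ((1 : ℂ)/2 - s) * Complex.Gamma (1 - s/2) / Complex.Gamma ((1 + s)/2)

noncomputable def Ψ (z : ℂ) : ℂ := deriv Complex.Gamma z / Complex.Gamma z

namespace Complex

lemma natCast_le_norm_add_natCast_of_re_nonneg {z : ℂ} (hz : 0 ≤ z.re) (j : ℕ) :
    (j : ℝ) ≤ ‖z + j‖ :=
  calc (j : ℝ) ≤ (z + j).re := by simpa using hz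
    _ ≤ ‖z + j‖ := re_le_norm _

lemma add_natCast_ne_zero_of_re_pos {z : ℂ} (hz : 0 < z.re) (j : ℕ) : z + j ≠ 0 :=
  ne_of_apply_ne re (by simpa using (add_pos_of_pos_of_nonneg hz j.cast_nonneg).ne')

lemma ne_neg_natCast_of_re_pos {z : ℂ} (hz : 0 < z.re) (m : ℕ) : z ≠ -m := fun h =>
  add_natCast_ne_zero_of_re_pos hz m (by rw [h, neg_add_cancel])

lemma re_pos_of_mem_ball {a z : ℂ} {r : ℝ} (hz : z ∈ Metric.ball a r) (hr : r ≤ a.re) :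
    0 < z.re := by
  rw [Metric.mem_ball, dist_eq] at hz
  have := (abs_le.1 (abs_re_le_norm (z - a))).1
  rw [sub_re] at this
  linarith

lemma re_pos_of_mem_ball_min {a b z : ℂ} (hz : z ∈ Metric.ball a (min a.re b.re)) :
    0 < z.re ∧ 0 < (z + (b - a)).re := by
  have hzb : z + (b - a) ∈ Metric.ball b (min a.re b.re) := by
    rwa [Metric.mem_ball, dist_eq, show z + (b - a) - b = z - a by ring, ← dist_eq]
  exact ⟨re_pos_of_mem_ball hz (min_le_left _ _), re_pos_of_mem_ball hzb (min_le_right _ _)⟩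

lemma norm_div_mul_add_natCast_le {z w : ℂ} (hz : 0 ≤ z.re) (hw : 0 ≤ w.re) (x : ℂ) {j : ℕ}
    (hj : j ≠ 0) : ‖x / ((z + j) * (w + j))‖ ≤ ‖x‖ / (j : ℝ) ^ 2 := by
  rw [norm_div, norm_mul, sq]
  have hj' : (0 : ℝ) < j := by positivity
  exact div_le_div_of_nonneg_left (norm_nonneg x) (by positivity)
    (mul_le_mul (natCast_le_norm_add_natCast_of_re_nonneg hz j)
      (natCast_le_norm_add_natCast_of_re_nonneg hw j) hj'.le (norm_nonneg _))

lemma summable_inv_add_sub_inv_add_of_re_pos {a b : ℂ} (ha : 0 < a.re) (hb : 0 < b.re) :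
    Summable fun n : ℕ => (b + n)⁻¹ - (a + n)⁻¹ := by
  refine ((Real.summable_one_div_nat_pow.2 one_lt_two).mul_left ‖a - b‖)
    |>.of_norm_bounded_eventually_nat ?_
  filter_upwards [eventually_ne_atTop 0] with n hn
  rw [inv_sub_inv (add_natCast_ne_zero_of_re_pos hb n) (add_natCast_ne_zero_of_re_pos ha n),
    add_sub_add_right_eq_sub, mul_one_div, mul_comm (b + n)]
  exact norm_div_mul_add_natCast_le ha.le hb.le _ hn

lemma digamma_add_nat {a : ℂ} (ha : ∀ m : ℕ, a ≠ -m) (N : ℕ) :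
    digamma (a + N) = digamma a + ∑ j ∈ Finset.range N, (a + j)⁻¹ := by
  induction N with
  | zero => simp
  | succ N ih =>
    have haN : ∀ m : ℕ, a + N ≠ -m := fun m h => ha (m + N) (by push_cast; linear_combination h)
    rw [Nat.cast_succ, ← add_assoc, digamma_apply_add_one _ haN, ih, Finset.sum_range_succ,
      add_assoc]

lemma logDeriv_Gamma_mul_div_Gamma_add {a b : ℂ} (ha : ∀ m : ℕ, a ≠ -m)
    (hb : ∀ m : ℕ, b ≠ -m) :
    logDeriv (fun z => Gamma z * Gamma b / (Gamma (z + (b - a)) * Gamma a)) a =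
      digamma a - digamma b := by
  have hshift : HasDerivAt (fun z => z + (b - a)) 1 a := (hasDerivAt_id a).add_const _
  have hab : a + (b - a) = b := by ring
  have hΓb : DifferentiableAt ℂ Gamma (a + (b - a)) := by
    rw [hab]
    exact differentiableAt_Gamma b hb
  have hcomp : logDeriv (fun z => Gamma (z + (b - a))) a = digamma b := by
    rw [← Function.comp_def, logDeriv_comp (g := fun z => z + (b - a)) hΓb
      hshift.differentiableAt, hshift.deriv, mul_one, hab, digamma_def]
  simp_rw [mul_div_mul_comm]
  rw [logDeriv_mul_const _ _ (div_ne_zero (Gamma_ne_zero hb) (Gamma_ne_zero ha)),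
    logDeriv_div (f := Gamma) (g := fun z => Gamma (z + (b - a))) _ (Gamma_ne_zero ha)
      (by rw [hab]; exact Gamma_ne_zero hb) (differentiableAt_Gamma a ha)
      (hΓb.comp (g := Gamma) a hshift.differentiableAt),
    hcomp, digamma_def]

/-- `1 + gammaRatioTerm a b j z = (z + (b - a) + j) * (a + j) / ((z + j) * (b + j))` is the `j`-th
factor of Euler's product for `Γ z * Γ b / (Γ (z + (b - a)) * Γ a)`. -/
noncomputable def gammaRatioTerm (a b : ℂ) (j : ℕ) (z : ℂ) : ℂ :=
  (b - a) * (a - z) / ((z + j) * (b + j))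

section gammaRatioTerm

variable {a b z : ℂ}

lemma one_add_gammaRatioTerm {j : ℕ} (hz : z + j ≠ 0) (hb : b + j ≠ 0) :
    1 + gammaRatioTerm a b j z = (z + (b - a) + j) * (a + j) / ((z + j) * (b + j)) := by
  rw [gammaRatioTerm, one_add_div (mul_ne_zero hz hb)]
  ring

lemma prod_range_succ_one_add_gammaRatioTerm (ha : 0 < a.re) (hb : 0 < b.re) (hz : 0 < z.re)
    (hzc : 0 < (z + (b - a)).re) {N : ℕ} (hN : N ≠ 0) :
    ∏ j ∈ Finset.range (N + 1), (1 + gammaRatioTerm a b j z) =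
      GammaSeq z N * GammaSeq b N / (GammaSeq (z + (b - a)) N * GammaSeq a N) := by
  have hN' : (N : ℂ) ≠ 0 := Nat.cast_ne_zero.2 hN
  have hpow : (N : ℂ) ^ z * (N : ℂ) ^ b = (N : ℂ) ^ (z + (b - a)) * (N : ℂ) ^ a := by
    rw [← cpow_add _ _ hN', ← cpow_add _ _ hN']
    ring_nf
  have hprod {w : ℂ} (hw : 0 < w.re) : ∏ j ∈ Finset.range (N + 1), (w + j) ≠ 0 :=
    Finset.prod_ne_zero_iff.2 fun j _ => add_natCast_ne_zero_of_re_pos hw j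
  rw [Finset.prod_congr rfl fun j _ => one_add_gammaRatioTerm
      (add_natCast_ne_zero_of_re_pos hz j) (add_natCast_ne_zero_of_re_pos hb j),
    Finset.prod_div_distrib, Finset.prod_mul_distrib, Finset.prod_mul_distrib]
  simp only [GammaSeq]
  field_simp [hprod ha, hprod hb, hprod hz, hprod hzc]
  rw [eq_div_iff (by simp [cpow_eq_zero_iff, hN', Nat.factorial_ne_zero]), one_mul]
  linear_combination -(N.factorial : ℂ) * hpow

lemma tprod_one_add_gammaRatioTerm (ha : 0 < a.re) (hb : 0 < b.re) (hz : 0 < z.re)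
    (hzc : 0 < (z + (b - a)).re) (h : Multipliable fun j => 1 + gammaRatioTerm a b j z) :
    ∏' j, (1 + gammaRatioTerm a b j z) =
      Gamma z * Gamma b / (Gamma (z + (b - a)) * Gamma a) := by
  have hlim := ((GammaSeq_tendsto_Gamma z).mul (GammaSeq_tendsto_Gamma b)).div
    ((GammaSeq_tendsto_Gamma (z + (b - a))).mul (GammaSeq_tendsto_Gamma a))
    (mul_ne_zero (Gamma_ne_zero_of_re_pos hzc) (Gamma_ne_zero_of_re_pos ha))
  refine tendsto_nhds_unique ((tendsto_add_atTop_iff_nat 1).2 h.hasProd.tendsto_prod_nat)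
    (hlim.congr' ?_)
  filter_upwards [eventually_ne_atTop 0] with N hN
  exact (prod_range_succ_one_add_gammaRatioTerm ha hb hz hzc hN).symm

lemma logDeriv_one_add_gammaRatioTerm {j : ℕ} (ha : a + j ≠ 0) (hb : b + j ≠ 0) :
    logDeriv (fun z => 1 + gammaRatioTerm a b j z) a = (b + j)⁻¹ - (a + j)⁻¹ := by
  have hd : HasDerivAt (fun z => 1 + gammaRatioTerm a b j z) ((b + j)⁻¹ - (a + j)⁻¹) a := by
    refine (((((hasDerivAt_id' a).const_sub a).const_mul (b - a)).div
      (((hasDerivAt_id' a).add_const (j : ℂ)).mul_const (b + j)) (mul_ne_zero ha hb)).const_add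
        1).congr_deriv ?_
    field_simp
    ring
  rw [logDeriv_apply, hd.deriv]
  simp [gammaRatioTerm]

lemma differentiableOn_gammaRatioTerm (hb : 0 < b.re) (j : ℕ) :
    DifferentiableOn ℂ (gammaRatioTerm a b j) {z | 0 < z.re} := fun z hz => by
  have hden := mul_ne_zero (add_natCast_ne_zero_of_re_pos hz j) (add_natCast_ne_zero_of_re_pos hb j)
  unfold gammaRatioTerm
  fun_prop (disch := exact hden)

lemma multipliableLocallyUniformlyOn_one_add_gammaRatioTerm (hb : 0 < b.re) :
    MultipliableLocallyUniformlyOn (fun j z => 1 + gammaRatioTerm a b j z)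
      (Metric.ball a (min a.re b.re)) := by
  refine Summable.multipliableLocallyUniformlyOn_nat_one_add Metric.isOpen_ball
    ((Real.summable_one_div_nat_pow.2 one_lt_two).mul_left (‖b - a‖ * min a.re b.re)) ?_
    fun j => ((differentiableOn_gammaRatioTerm hb j).mono
      fun z hz => (re_pos_of_mem_ball_min hz).1).continuousOn
  filter_upwards [eventually_ne_atTop 0] with j hj z hz
  refine (norm_div_mul_add_natCast_le (re_pos_of_mem_ball_min hz).1.le hb.le _ hj).trans ?_
  rw [norm_mul, mul_one_div, norm_sub_rev a z]
  gcongr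
  rw [← dist_eq]
  exact (Metric.mem_ball.1 hz).le

end gammaRatioTerm

theorem hasSum_digamma_sub_digamma_of_re_pos {a b : ℂ} (ha : 0 < a.re) (hb : 0 < b.re) :
    HasSum (fun n : ℕ => (b + n)⁻¹ - (a + n)⁻¹) (digamma a - digamma b) := by
  set U := Metric.ball a (min a.re b.re)
  have haU : a ∈ U := Metric.mem_ball_self (lt_min ha hb)
  have hmult := multipliableLocallyUniformlyOn_one_add_gammaRatioTerm (a := a) hb
  have hdiff (j : ℕ) : DifferentiableOn ℂ (gammaRatioTerm a b j) U :=
    (differentiableOn_gammaRatioTerm hb j).mono fun z hz => (re_pos_of_mem_ball_min hz).1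
  have hlogDeriv (j : ℕ) :
      logDeriv (fun z => 1 + gammaRatioTerm a b j z) a = (b + j)⁻¹ - (a + j)⁻¹ :=
    logDeriv_one_add_gammaRatioTerm (add_natCast_ne_zero_of_re_pos ha j)
      (add_natCast_ne_zero_of_re_pos hb j)
  have hsum := summable_inv_add_sub_inv_add_of_re_pos ha hb
  have htprod : (fun z => ∏' j, (1 + gammaRatioTerm a b j z)) =ᶠ[𝓝 a]
      fun z => Gamma z * Gamma b / (Gamma (z + (b - a)) * Gamma a) := by
    filter_upwards [Metric.isOpen_ball.mem_nhds haU] with z hz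
    exact tprod_one_add_gammaRatioTerm ha hb (re_pos_of_mem_ball_min hz).1
      (re_pos_of_mem_ball_min hz).2 (hmult.multipliable hz)
  have key := logDeriv_tprod_eq_tsum Metric.isOpen_ball haU (fun j => by simp [gammaRatioTerm])
    (fun j => (hdiff j).const_add 1) (by simpa only [hlogDeriv] using hsum) hmult
    (by simp [gammaRatioTerm])
  rw [(logDeriv_congr_nhds htprod).eq_of_nhds, logDeriv_Gamma_mul_div_Gamma_add
    (ne_neg_natCast_of_re_pos ha) (ne_neg_natCast_of_re_pos hb)] at key
  simp only [hlogDeriv] at key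
  exact key ▸ hsum.hasSum

theorem hasSum_digamma_sub_digamma {a b : ℂ} (ha : ∀ m : ℕ, a ≠ -m) (hb : ∀ m : ℕ, b ≠ -m) :
    HasSum (fun n : ℕ => (b + n)⁻¹ - (a + n)⁻¹) (digamma a - digamma b) := by
  obtain ⟨N, hN⟩ := exists_nat_gt (max (-a.re) (-b.re))
  have hshift := hasSum_digamma_sub_digamma_of_re_pos (a := a + N) (b := b + N)
    (by simp only [add_re, natCast_re]; linarith [le_max_left (-a.re) (-b.re)])
    (by simp only [add_re, natCast_re]; linarith [le_max_right (-a.re) (-b.re)])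
  rw [digamma_add_nat ha, digamma_add_nat hb] at hshift
  have hterm : (fun n : ℕ => (b + ↑(n + N))⁻¹ - (a + ↑(n + N))⁻¹) =
      fun n : ℕ => (b + N + n)⁻¹ - (a + N + n)⁻¹ := by
    ext n
    push_cast
    ring_nf
  rw [← hasSum_nat_add_iff' N, hterm, Finset.sum_sub_distrib]
  refine (congrArg (HasSum _) ?_).mpr hshift
  ring

end Complex

lemma inv_sub_inv_conj_add_inv_sub_inv_conj (s : ℂ) (n : ℕ) (h1 : 1 - s / 2 + n ≠ 0)
    (h2 : 1 - starRingEnd ℂ s / 2 + n ≠ 0) (h3 : (1 + s) / 2 + n ≠ 0)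
    (h4 : (1 + starRingEnd ℂ s) / 2 + n ≠ 0) :
    (1 - s / 2 + n)⁻¹ - (1 - starRingEnd ℂ s / 2 + n)⁻¹
        + (((1 + s) / 2 + n)⁻¹ - ((1 + starRingEnd ℂ s) / 2 + n)⁻¹) =
      -4 * I * (((1 / 2 - s.re) * s.im : ℝ) : ℂ) *
        ((8 * ((n : ℝ) + 1 - 1 / 4) / (‖(2 * (n + 1) + s - 1 : ℂ)‖ ^ 2 *
          ‖(2 * (n + 1) - starRingEnd ℂ s : ℂ)‖ ^ 2) : ℝ) : ℂ) := by
  set w := starRingEnd ℂ s with hw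
  have hnorm1 : (‖(2 * (n + 1) + s - 1 : ℂ)‖ : ℂ) ^ 2 =
      (2 * (n + 1) + s - 1) * (2 * (n + 1) + w - 1) := by
    rw [← mul_conj']
    simp [w, map_ofNat]
  have hnorm2 : (‖(2 * (n + 1) - w : ℂ)‖ : ℂ) ^ 2 = (2 * (n + 1) - w) * (2 * (n + 1) - s) := by
    rw [← mul_conj']
    simp [w, map_ofNat]
  have hconst : -4 * I * ((1 / 2 - (s.re : ℂ)) * s.im) = -(1 - s - w) * (s - w) := by
    apply Complex.ext <;> simp [w]
    ring
  have d1 : (2 * (n + 1) + s - 1 : ℂ) ≠ 0 := fun h => h3 (by linear_combination h / 2)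
  have d2 : (2 * (n + 1) + w - 1 : ℂ) ≠ 0 := fun h => h4 (by linear_combination h / 2)
  have d3 : (2 * (n + 1) - w : ℂ) ≠ 0 := fun h => h2 (by linear_combination h / 2)
  have d4 : (2 * (n + 1) - s : ℂ) ≠ 0 := fun h => h1 (by linear_combination h / 2)
  push_cast
  rw [hconst, hnorm1, hnorm2, show 1 - s / 2 + n = (2 * (n + 1) - s) / 2 by ring,
    show 1 - w / 2 + n = (2 * (n + 1) - w) / 2 by ring,
    show (1 + s) / 2 + n = (2 * (n + 1) + s - 1) / 2 by ring,
    show (1 + w) / 2 + n = (2 * (n + 1) + w - 1) / 2 by ring]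
  field_simp
  ring

lemma Ψ_eq_digamma (z : ℂ) : Ψ z = digamma z := rfl

theorem stmt_5 (σ t : ℝ) (s : ℂ) (hs : s = σ + t * I)
    (h1 : ∀ n : ℕ, 1 - s / 2 ≠ -n) (h2 : ∀ n : ℕ, 1 - (starRingEnd ℂ) s / 2 ≠ -n)
    (h3 : ∀ n : ℕ, (1 + s) / 2 ≠ -n) (h4 : ∀ n : ℕ, (1 + (starRingEnd ℂ) s) / 2 ≠ -n) :
    Ψ (1 - (starRingEnd ℂ) s / 2) - Ψ (1 - s / 2) - Ψ ((1 + s) / 2) + Ψ ((1 + (starRingEnd ℂ) s) / 2)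
      = -4 * I * (((1/2 - σ) * t : ℝ) : ℂ) *
        ((∑' n : ℕ, (8 * ((n : ℝ) + 1 - 1/4) /
          ((‖(2 * (n + 1) + s - 1 : ℂ)‖)^2 * (‖(2 * (n + 1) - (starRingEnd ℂ) s : ℂ)‖)^2)) : ℝ) : ℂ) := by
  have hσ : s.re = σ := by simp [hs]
  have ht : s.im = t := by simp [hs]
  have hne {z : ℂ} (hz : ∀ n : ℕ, z ≠ -n) (n : ℕ) : z + n ≠ 0 := fun h =>
    hz n (eq_neg_of_add_eq_zero_left h)
  have key :=
    ((hasSum_digamma_sub_digamma h2 h1).add (hasSum_digamma_sub_digamma h4 h3)).tsum_eq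
  rw [tsum_congr fun n => inv_sub_inv_conj_add_inv_sub_inv_conj s n (hne h1 n) (hne h2 n)
    (hne h3 n) (hne h4 n), tsum_mul_left, ← ofReal_tsum, hσ, ht] at key
  rw [key]
  simp only [Ψ_eq_digamma]
  ring
end

section
/- Fix σ < 1/2. The function t ↦ |X(σ + it)| is strictly monotonically increasing on (0, ∞), where X(s) = (5/π)^{1/2−s} Γ(1−s/2)/Γ((1+s)/2). -/
/-!
With `a = 1 - σ/2` and `b = (1 + σ)/2`, the reflection `Γ(conj s) = conj Γ(s)` gives
`|X(σ + it)| = (5/π)^(1/2 - σ) |Γ(a + iy)| / |Γ(b + iy)|` with `y = t/2`, and `b < a`, `a + b > 0`.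
By Euler's limit formula the ratio `|Γ(a + iy)| / |Γ(b + iy)|` is the limit of
`n^(a-b) ∏_{j ≤ n} |b + j + iy| / |a + j + iy|`, whose factors are nondecreasing in `y` since
`|b + j| ≤ |a + j|`; so the ratio is nondecreasing. A limit only preserves monotonicity, so
strictness comes from peeling off the factor `|b + iy| / |a + iy|` with `Γ(s + 1) = s Γ(s)`: it is
strictly increasing because `|b| < a`.
-/

open Complex Filter Topology

open Finset Nat Set ComplexConjugate

lemma norm_ofReal_add_mul_I_div_monotoneOn {c d : ℝ} (hcd : c ^ 2 ≤ d ^ 2) :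
    MonotoneOn (fun y : ℝ => ‖(c : ℂ) + y * I‖ / ‖(d : ℂ) + y * I‖) (Ioi 0) := by
  intro u (hu : 0 < u) v (hv : 0 < v) huv
  simp only [norm_add_mul_I, ← Real.sqrt_div' _ (add_nonneg (sq_nonneg d) (sq_nonneg _))]
  refine Real.sqrt_le_sqrt ?_
  rw [div_le_div_iff₀ (by positivity) (by positivity)]
  nlinarith [mul_self_le_mul_self (le_of_lt hu) huv]

lemma norm_ofReal_add_mul_I_div_strictMonoOn {c d : ℝ} (hcd : c ^ 2 < d ^ 2) :
    StrictMonoOn (fun y : ℝ => ‖(c : ℂ) + y * I‖ / ‖(d : ℂ) + y * I‖) (Ioi 0) := by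
  intro u (hu : 0 < u) v (hv : 0 < v) huv
  simp only [norm_add_mul_I, ← Real.sqrt_div' _ (add_nonneg (sq_nonneg d) (sq_nonneg _))]
  refine Real.sqrt_lt_sqrt (by positivity) ?_
  rw [div_lt_div_iff₀ (by positivity) (by positivity)]
  nlinarith [mul_self_lt_mul_self (le_of_lt hu) huv]

lemma Gamma_ofReal_add_mul_I_ne_zero (x : ℝ) {y : ℝ} (hy : y ≠ 0) : Gamma (x + y * I) ≠ 0 :=
  Gamma_ne_zero fun m h => hy <| by simpa using congrArg im h

lemma norm_GammaSeq (s : ℂ) {n : ℕ} (hn : n ≠ 0) :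
    ‖GammaSeq s n‖ = (n : ℝ) ^ s.re * n ! / ∏ j ∈ range (n + 1), ‖s + j‖ := by
  rw [GammaSeq, norm_div, norm_mul, norm_natCast_cpow_of_pos (Nat.pos_of_ne_zero hn), norm_prod]
  simp

lemma norm_GammaSeq_div_norm_GammaSeq (a b : ℝ) {y : ℝ} (hy : y ≠ 0) {n : ℕ} (hn : n ≠ 0) :
    ‖GammaSeq (a + y * I) n‖ / ‖GammaSeq (b + y * I) n‖ =
      (n : ℝ) ^ a / (n : ℝ) ^ b *
        ∏ j ∈ range (n + 1), ‖((b + j : ℝ) : ℂ) + y * I‖ / ‖((a + j : ℝ) : ℂ) + y * I‖ := by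
  have hpos : ∀ x : ℝ, 0 < ‖(x : ℂ) + y * I‖ := fun x => by
    rw [norm_add_mul_I]; positivity
  have hshift : ∀ (x : ℝ) (j : ℕ), (x : ℂ) + y * I + j = ((x + j : ℝ) : ℂ) + y * I :=
    fun x j => by push_cast; ring
  have hre : ∀ x : ℝ, ((x : ℂ) + y * I).re = x := by simp
  have hprod : ∀ x : ℝ, 0 < ∏ j ∈ range (n + 1), ‖((x + j : ℝ) : ℂ) + y * I‖ :=
    fun x => prod_pos fun j _ => hpos (x + j)
  simp only [norm_GammaSeq _ hn, hre, hshift, prod_div_distrib]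
  field_simp [(hprod a).ne', (hprod b).ne']

lemma norm_Gamma_div_norm_Gamma_monotoneOn {a b : ℝ} (hba : b ≤ a) (hab : 0 ≤ a + b) :
    MonotoneOn (fun y : ℝ => ‖Gamma (a + y * I)‖ / ‖Gamma (b + y * I)‖) (Ioi 0) := by
  intro u (hu : 0 < u) v (hv : 0 < v) huv
  have hlim : ∀ y : ℝ, y ≠ 0 →
      Tendsto (fun n => ‖GammaSeq (a + y * I) n‖ / ‖GammaSeq (b + y * I) n‖) atTop
        (𝓝 (‖Gamma (a + y * I)‖ / ‖Gamma (b + y * I)‖)) := fun y hy =>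
    (GammaSeq_tendsto_Gamma _).norm.div (GammaSeq_tendsto_Gamma _).norm
      (norm_ne_zero_iff.mpr (Gamma_ofReal_add_mul_I_ne_zero b hy))
  refine le_of_tendsto_of_tendsto (hlim u hu.ne') (hlim v hv.ne') ?_
  filter_upwards [eventually_ne_atTop 0] with n hn
  rw [norm_GammaSeq_div_norm_GammaSeq a b hu.ne' hn,
    norm_GammaSeq_div_norm_GammaSeq a b hv.ne' hn]
  refine mul_le_mul_of_nonneg_left (prod_le_prod (fun j _ => by positivity) fun j _ => ?_)
    (by positivity)
  have hsq : (b + j) ^ 2 ≤ (a + j) ^ 2 :=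
    sq_le_sq' (by linarith [j.cast_nonneg (α := ℝ)]) (by linarith)
  exact norm_ofReal_add_mul_I_div_monotoneOn hsq hu hv huv

lemma norm_Gamma_div_norm_Gamma_strictMonoOn {a b : ℝ} (hba : b < a) (hab : 0 < a + b) :
    StrictMonoOn (fun y : ℝ => ‖Gamma (a + y * I)‖ / ‖Gamma (b + y * I)‖) (Ioi 0) := by
  intro u (hu : 0 < u) v (hv : 0 < v) huv
  have hshift : ∀ x y : ℝ, y ≠ 0 →
      ‖Gamma (x + y * I)‖ = ‖Gamma ((x + 1 : ℝ) + y * I)‖ / ‖(x : ℂ) + y * I‖ := by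
    intro x y hy
    have hne : (x : ℂ) + y * I ≠ 0 := fun h => hy (by simpa using congrArg im h)
    rw [show ((x + 1 : ℝ) : ℂ) + y * I = (x + y * I) + 1 by push_cast; ring, Gamma_add_one _ hne,
      norm_mul, mul_div_cancel_left₀ _ (norm_ne_zero_iff.mpr hne)]
  have hsplit : ∀ y : ℝ, y ≠ 0 → ‖Gamma (a + y * I)‖ / ‖Gamma (b + y * I)‖ =
      ‖Gamma ((a + 1 : ℝ) + y * I)‖ / ‖Gamma ((b + 1 : ℝ) + y * I)‖ *
        (‖(b : ℂ) + y * I‖ / ‖(a : ℂ) + y * I‖) := by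
    intro y hy
    rw [hshift a y hy, hshift b y hy]
    field_simp
  have hΓ : ∀ x : ℝ, 0 < ‖Gamma (x + v * I)‖ := fun x =>
    norm_pos_iff.mpr (Gamma_ofReal_add_mul_I_ne_zero x hv.ne')
  dsimp only
  rw [hsplit u hu.ne', hsplit v hv.ne']
  exact mul_lt_mul'
    (norm_Gamma_div_norm_Gamma_monotoneOn (by linarith) (by linarith) hu hv huv.le)
    (norm_ofReal_add_mul_I_div_strictMonoOn (by nlinarith) hu hv huv) (by positivity)
    (div_pos (hΓ _) (hΓ _))

lemma norm_X_ofReal_add_mul_I (σ t : ℝ) :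
    ‖X (σ + t * I)‖ = (5 / Real.pi) ^ (1 / 2 - σ) *
      (‖Gamma ((1 - σ / 2 : ℝ) + (t / 2 : ℝ) * I)‖ /
        ‖Gamma (((1 + σ) / 2 : ℝ) + (t / 2 : ℝ) * I)‖) := by
  have hnum : 1 - (σ + t * I) / 2 = conj ((1 - σ / 2 : ℝ) + (t / 2 : ℝ) * I) := by
    simp only [map_add, map_mul, conj_ofReal, conj_I]
    push_cast
    ring
  have hden : (1 + (σ + t * I)) / 2 = ((1 + σ) / 2 : ℝ) + (t / 2 : ℝ) * I := by
    push_cast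
    ring
  have hpow :
      ‖((5 : ℂ) / Real.pi) ^ ((1 : ℂ) / 2 - (σ + t * I))‖ = (5 / Real.pi) ^ (1 / 2 - σ) := by
    rw [show (5 : ℂ) / Real.pi = ((5 / Real.pi : ℝ) : ℂ) by push_cast; rfl,
      norm_cpow_eq_rpow_re_of_pos (by positivity)]
    simp
  rw [X, norm_div, norm_mul, hnum, hden, hpow, Gamma_conj, norm_conj, mul_div_assoc]

theorem stmt_7 (σ : ℝ) (hσ : σ < 1/2) :
    StrictMonoOn (fun t : ℝ => ‖X (σ + t * I)‖) (Set.Ioi 0) := by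
  have hratio := norm_Gamma_div_norm_Gamma_strictMonoOn (a := 1 - σ / 2) (b := (1 + σ) / 2)
    (by linarith) (by linarith)
  intro t₁ (ht₁ : 0 < t₁) t₂ (ht₂ : 0 < t₂) ht
  simp only [norm_X_ofReal_add_mul_I]
  exact mul_lt_mul_of_pos_left (hratio (half_pos ht₁) (half_pos ht₂) (by linarith))
    (by positivity)
end

section
/- Fix σ > 1/2. The function t ↦ |X(σ + it)| is strictly monotonically decreasing on (0, ∞), where X(s) = (5/π)^{1/2−s} Γ(1−s/2)/Γ((1+s)/2). -/
/-! Writing `s = σ + it`, the conjugate symmetry of `Γ` gives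
`|X s| = (5/π)^{1/2-σ} |Γ(a + iu)| / |Γ(b + iu)|` with `a = 1 - σ/2`, `b = (1 + σ)/2`, `u = t/2`,
and `σ > 1/2` is exactly `|a| < b`. By Gauss's product the ratio `|Γ(a + iu)| / |Γ(b + iu)|` is the
limit of `n^{a-b} ∏_{j ≤ n} |b + j + iu| / |a + j + iu|`, and each factor, whose square is
`1 + ((b + j)² - (a + j)²) / ((a + j)² + u²)`, is nonincreasing in `u > 0` since `|a + j| ≤ b + j`.
Strictness comes from `Γ(z + 1) = z Γ(z)`: it splits off the strictly decreasing factor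
`|b + iu| / |a + iu|` and leaves the nonincreasing ratio for `(a + 1, b + 1)`. -/

open Complex Filter Topology

namespace Complex

lemma add_mul_I_ne_zero (x : ℝ) {u : ℝ} (hu : u ≠ 0) : (x + u * I : ℂ) ≠ 0 :=
  fun h ↦ hu (by simpa using congrArg im h)

lemma Gamma_add_mul_I_ne_zero (x : ℝ) {u : ℝ} (hu : u ≠ 0) : Gamma (x + u * I) ≠ 0 :=
  Gamma_ne_zero fun m h ↦ hu (by simpa using congrArg im h)

lemma sq_norm_add_mul_I (x u : ℝ) : ‖(x + u * I : ℂ)‖ ^ 2 = x ^ 2 + u ^ 2 := by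
  rw [Complex.sq_norm, normSq_add_mul_I]

lemma norm_add_mul_I_pos (x : ℝ) {u : ℝ} (hu : u ≠ 0) : 0 < ‖(x + u * I : ℂ)‖ :=
  norm_pos_iff.2 (add_mul_I_ne_zero x hu)

lemma antitoneOn_norm_div_norm {x y : ℝ} (h : |x| ≤ |y|) :
    AntitoneOn (fun u : ℝ ↦ ‖(y + u * I : ℂ)‖ / ‖(x + u * I : ℂ)‖) (Set.Ioi 0) := by
  intro u hu v hv huv
  simp only [Set.mem_Ioi] at hu hv
  rw [div_le_div_iff₀ (norm_add_mul_I_pos x hv.ne') (norm_add_mul_I_pos x hu.ne'),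
    ← pow_le_pow_iff_left₀ (by positivity) (by positivity) two_ne_zero, mul_pow, mul_pow,
    sq_norm_add_mul_I, sq_norm_add_mul_I, sq_norm_add_mul_I, sq_norm_add_mul_I]
  nlinarith [sq_le_sq.2 h, mul_self_le_mul_self hu.le huv]

lemma strictAntiOn_norm_div_norm {x y : ℝ} (h : |x| < |y|) :
    StrictAntiOn (fun u : ℝ ↦ ‖(y + u * I : ℂ)‖ / ‖(x + u * I : ℂ)‖) (Set.Ioi 0) := by
  intro u hu v hv huv
  simp only [Set.mem_Ioi] at hu hv
  rw [div_lt_div_iff₀ (norm_add_mul_I_pos x hv.ne') (norm_add_mul_I_pos x hu.ne'),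
    ← pow_lt_pow_iff_left₀ (by positivity) (by positivity) two_ne_zero, mul_pow, mul_pow,
    sq_norm_add_mul_I, sq_norm_add_mul_I, sq_norm_add_mul_I, sq_norm_add_mul_I]
  nlinarith [sq_lt_sq.2 h, mul_self_lt_mul_self hu.le huv]

lemma norm_GammaSeq {n : ℕ} (hn : n ≠ 0) (s : ℂ) :
    ‖GammaSeq s n‖ = (n : ℝ) ^ s.re * n.factorial / ∏ j ∈ Finset.range (n + 1), ‖s + j‖ := by
  rw [GammaSeq, norm_div, norm_mul, norm_prod, norm_natCast_cpow_of_pos (Nat.pos_of_ne_zero hn)]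
  simp

lemma norm_GammaSeq_div_norm_GammaSeq {n : ℕ} (hn : n ≠ 0) (a b u : ℝ) :
    ‖GammaSeq (a + u * I) n‖ / ‖GammaSeq (b + u * I) n‖ =
      (n : ℝ) ^ (a - b) *
        ∏ j ∈ Finset.range (n + 1), ‖((b + j : ℝ) + u * I : ℂ)‖ / ‖((a + j : ℝ) + u * I : ℂ)‖ := by
  have hshift (x : ℝ) (j : ℕ) : (x + u * I + j : ℂ) = ((x + j : ℝ) + u * I : ℂ) := by
    push_cast; ring
  have hre (x : ℝ) : (x + u * I : ℂ).re = x := by simp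
  simp only [norm_GammaSeq hn, hre, hshift]
  rw [Finset.prod_div_distrib, Real.rpow_sub (by positivity)]
  field_simp

lemma antitoneOn_norm_GammaSeq_div_norm_GammaSeq {n : ℕ} (hn : n ≠ 0) {a b : ℝ} (h : |a| ≤ b) :
    AntitoneOn (fun u : ℝ ↦ ‖GammaSeq (a + u * I) n‖ / ‖GammaSeq (b + u * I) n‖)
      (Set.Ioi 0) := by
  intro u hu v hv huv
  simp only [norm_GammaSeq_div_norm_GammaSeq hn a b u,
    norm_GammaSeq_div_norm_GammaSeq hn a b v]
  refine mul_le_mul_of_nonneg_left (Finset.prod_le_prod (fun j _ ↦ by positivity) fun j _ ↦ ?_)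
    (by positivity)
  refine antitoneOn_norm_div_norm ?_ hu hv huv
  have hj : (0 : ℝ) ≤ j := j.cast_nonneg
  rw [abs_of_nonneg (show 0 ≤ b + j by linarith [abs_nonneg a])]
  exact (abs_add_le a j).trans (by rw [abs_of_nonneg hj]; linarith)

lemma antitoneOn_norm_Gamma_div_norm_Gamma {a b : ℝ} (h : |a| ≤ b) :
    AntitoneOn (fun u : ℝ ↦ ‖Gamma (a + u * I)‖ / ‖Gamma (b + u * I)‖) (Set.Ioi 0) := by
  intro u hu v hv huv
  have hlim (w : ℝ) (hw : w ≠ 0) :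
      Tendsto (fun n ↦ ‖GammaSeq (a + w * I) n‖ / ‖GammaSeq (b + w * I) n‖) atTop
        (𝓝 (‖Gamma (a + w * I)‖ / ‖Gamma (b + w * I)‖)) :=
    (GammaSeq_tendsto_Gamma _).norm.div (GammaSeq_tendsto_Gamma _).norm
      (norm_ne_zero_iff.2 (Gamma_add_mul_I_ne_zero b hw))
  refine le_of_tendsto_of_tendsto (hlim v (ne_of_gt hv)) (hlim u (ne_of_gt hu)) ?_
  filter_upwards [eventually_ne_atTop 0] with n hn
  exact antitoneOn_norm_GammaSeq_div_norm_GammaSeq hn h hu hv huv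

lemma norm_Gamma_div_norm_Gamma_eq (a b : ℝ) {u : ℝ} (hu : u ≠ 0) :
    ‖Gamma (a + u * I)‖ / ‖Gamma (b + u * I)‖ =
      ‖(b + u * I : ℂ)‖ / ‖(a + u * I : ℂ)‖ *
        (‖Gamma ((a + 1 : ℝ) + u * I)‖ / ‖Gamma ((b + 1 : ℝ) + u * I)‖) := by
  have hshift (x : ℝ) : ((x + 1 : ℝ) + u * I : ℂ) = x + u * I + 1 := by push_cast; ring
  rw [hshift, hshift, Gamma_add_one _ (add_mul_I_ne_zero a hu),
    Gamma_add_one _ (add_mul_I_ne_zero b hu), norm_mul, norm_mul]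
  have := norm_add_mul_I_pos a hu
  have := norm_add_mul_I_pos b hu
  field_simp

lemma strictAntiOn_norm_Gamma_div_norm_Gamma {a b : ℝ} (h : |a| < b) :
    StrictAntiOn (fun u : ℝ ↦ ‖Gamma (a + u * I)‖ / ‖Gamma (b + u * I)‖) (Set.Ioi 0) := by
  intro u hu v hv huv
  simp only [norm_Gamma_div_norm_Gamma_eq a b (ne_of_gt hu),
    norm_Gamma_div_norm_Gamma_eq a b (ne_of_gt hv)]
  have h₁ : |a + 1| ≤ b + 1 := (abs_add_le a 1).trans (by rw [abs_one]; linarith)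
  refine mul_lt_mul (strictAntiOn_norm_div_norm ?_ hu hv huv)
    (antitoneOn_norm_Gamma_div_norm_Gamma h₁ hu hv huv.le) ?_ (by positivity)
  · exact h.trans_le (le_abs_self b)
  · exact div_pos (norm_pos_iff.2 (Gamma_add_mul_I_ne_zero _ (ne_of_gt hv)))
      (norm_pos_iff.2 (Gamma_add_mul_I_ne_zero _ (ne_of_gt hv)))

end Complex

open ComplexConjugate in
lemma norm_X (σ t : ℝ) :
    ‖X (σ + t * I)‖ = (5 / Real.pi) ^ ((1 : ℝ) / 2 - σ) *
      (‖Gamma ((1 - σ / 2 : ℝ) + (t / 2 : ℝ) * I)‖ /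
        ‖Gamma (((1 + σ) / 2 : ℝ) + (t / 2 : ℝ) * I)‖) := by
  have hconj : (1 - (σ + t * I) / 2 : ℂ) = conj ((1 - σ / 2 : ℝ) + (t / 2 : ℝ) * I) := by
    simp only [map_add, map_mul, conj_I, conj_ofReal]
    push_cast; ring
  rw [X, norm_div, norm_mul, hconj, Gamma_conj, norm_conj, mul_div_assoc,
    show ((5 : ℂ) / Real.pi) = ((5 / Real.pi : ℝ) : ℂ) by push_cast; rfl,
    norm_cpow_eq_rpow_re_of_pos (by positivity)]
  congr 3
  · simp
  · congr 1; push_cast; ring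

theorem stmt_8 (σ : ℝ) (hσ : σ > 1/2) :
    StrictAntiOn (fun t : ℝ => ‖X (σ + t * I)‖) (Set.Ioi 0) := by
  have hab : |1 - σ / 2| < (1 + σ) / 2 := abs_lt.2 ⟨by linarith, by linarith⟩
  intro t ht u hu htu
  simp only [norm_X]
  exact mul_lt_mul_of_pos_left (strictAntiOn_norm_Gamma_div_norm_Gamma hab
    (Set.mem_Ioi.2 (half_pos ht)) (Set.mem_Ioi.2 (half_pos hu)) (by linarith)) (by positivity)
end
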